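/- For finite nonempty graphs G and H, (G □ H)_δ = G_δ □ H_δ if and only if G = K₁ or H = K₁ (i.e., at least one of G, H has exactly one vertex). -/

import Mathlib

open scoped Classical
open SimpleGraph

/-- The δ-complement of a graph: `u v` are adjacent iff they are distinct and
either they have equal degrees and are non-adjacent in `G`, or they have
different degrees and are adjacent in `G`. -/
def deltaComp {V : Type*} [Fintype V] (G : SimpleGraph V) : SimpleGraph V where
  Adj u v := u ≠ v ∧ ((G.degree u = G.degree v ∧ ¬ G.Adj u v) ∨
    (G.degree u ≠ G.degree v ∧ G.Adj u v))
  symm := ⟨by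
    intro u v h
    refine ⟨h.1.symm, ?_⟩
    rcases h.2 with ⟨hd, ha⟩ | ⟨hd, ha⟩
    · exact Or.inl ⟨hd.symm, fun hh => ha hh.symm⟩
    · exact Or.inr ⟨fun hh => hd hh.symm, ha.symm⟩⟩
  loopless := ⟨fun v h => h.1 rfl⟩

/-- The δ-chromatic number: chromatic number of the δ-complement. -/
noncomputable def deltaChrom {V : Type*} [Fintype V] (G : SimpleGraph V) : ℕ∞ :=
  (deltaComp G).chromaticNumber

/-!
If `G` and `H` both have at least two vertices, each has two distinct vertices of equal degree
(the degrees `0` and `n - 1` cannot both occur). Combining them gives two vertices of `G □ H` that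
differ in both coordinates and have equal degree, so they are adjacent in `(G □ H)_δ`, while no
box product joins such vertices. If instead `G = K₁`, every vertex `(a, b)` of `G □ H` has the
degree of `b` in `H`, and both sides reduce to `H_δ`.
-/

open Finset

namespace SimpleGraph

variable {V W : Type*}

theorem exists_ne_degree_eq [Fintype V] [Nontrivial V] (G : SimpleGraph V) [DecidableRel G.Adj] :
    ∃ u v, u ≠ v ∧ G.degree u = G.degree v := by
  by_contra! hne
  let deg : V → ℕ := fun v => G.degree v
  have hinj : Function.Injective deg := fun u v huv => by_contra fun h => hne u v h huv
  have himage : univ.image deg = range (Fintype.card V) :=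
    eq_of_subset_of_card_le
      (fun d hd => by
        obtain ⟨v, -, rfl⟩ := mem_image.1 hd
        exact mem_range.2 (G.degree_lt_card_verts v))
      (by rw [card_image_of_injective _ hinj, card_range, card_univ])
  have hcard := Fintype.one_lt_card (α := V)
  obtain ⟨u, -, hu⟩ := mem_image.1 (himage ▸ mem_range.2 (by omega) : 0 ∈ univ.image deg)
  obtain ⟨w, -, hw⟩ := mem_image.1
    (himage ▸ mem_range.2 (by omega) : Fintype.card V - 1 ∈ univ.image deg)
  exact ((G.degree_eq_zero u).1 hu).not_isUniversal w ((G.degree_eq_card_sub_one w).1 hw)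

theorem not_boxProd_adj_of_ne_of_ne (G : SimpleGraph V) (H : SimpleGraph W) {a a' : V} {b b' : W}
    (ha : a ≠ a') (hb : b ≠ b') : ¬(G □ H).Adj (a, b) (a', b') := by
  simp [boxProd_adj, ha, hb]

variable [Fintype V] [Fintype W]

theorem deltaComp_adj (G : SimpleGraph V) {u v : V} :
    (deltaComp G).Adj u v ↔ u ≠ v ∧ ((G.degree u = G.degree v ∧ ¬ G.Adj u v) ∨
      (G.degree u ≠ G.degree v ∧ G.Adj u v)) :=
  Iff.rfl

theorem deltaComp_boxProd_adj_of_degree_eq (G : SimpleGraph V) (H : SimpleGraph W)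
    {a a' : V} {b b' : W} (ha : a ≠ a') (hb : b ≠ b') (hda : G.degree a = G.degree a')
    (hdb : H.degree b = H.degree b') :
    (deltaComp (G □ H)).Adj (a, b) (a', b') := by
  refine ⟨by simp [ha], Or.inl ⟨?_, ?_⟩⟩
  · rw [degree_boxProd, degree_boxProd, hda, hdb]
  · exact not_boxProd_adj_of_ne_of_ne G H ha hb

theorem deltaComp_boxProd_of_subsingleton_left [Subsingleton V] (G : SimpleGraph V)
    (H : SimpleGraph W) : deltaComp (G □ H) = deltaComp G □ deltaComp H := by
  ext ⟨a, b⟩ ⟨a', b'⟩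
  obtain rfl : a = a' := Subsingleton.elim a a'
  simp [deltaComp_adj, boxProd_adj, degree_boxProd]

theorem deltaComp_boxProd_of_subsingleton_right [Subsingleton W] (G : SimpleGraph V)
    (H : SimpleGraph W) : deltaComp (G □ H) = deltaComp G □ deltaComp H := by
  ext ⟨a, b⟩ ⟨a', b'⟩
  obtain rfl : b = b' := Subsingleton.elim b b'
  simp [deltaComp_adj, boxProd_adj, degree_boxProd]

end SimpleGraph

/-- For nonempty graphs, `(G □ H)_δ = G_δ □ H_δ` iff `G = K₁` or `H = K₁`. -/
theorem deltaComp_boxProd_eq_iff_card_one {V W : Type*} [Fintype V] [Fintype W]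
    [Nonempty V] [Nonempty W] (G : SimpleGraph V) (H : SimpleGraph W) :
    deltaComp (G □ H) = (deltaComp G).boxProd (deltaComp H) ↔
      Fintype.card V = 1 ∨ Fintype.card W = 1 := by
  constructor
  · intro heq
    by_contra! hcard
    have : Nontrivial V :=
      Fintype.one_lt_card_iff_nontrivial.1 (lt_of_le_of_ne Fintype.card_pos hcard.1.symm)
    have : Nontrivial W :=
      Fintype.one_lt_card_iff_nontrivial.1 (lt_of_le_of_ne Fintype.card_pos hcard.2.symm)
    obtain ⟨a, a', ha, hda⟩ := G.exists_ne_degree_eq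
    obtain ⟨b, b', hb, hdb⟩ := H.exists_ne_degree_eq
    have hadj := heq ▸ deltaComp_boxProd_adj_of_degree_eq G H ha hb hda hdb
    exact not_boxProd_adj_of_ne_of_ne _ _ ha hb hadj
  · rintro (h | h)
    · have := Fintype.card_le_one_iff_subsingleton.1 h.le
      exact deltaComp_boxProd_of_subsingleton_left G H
    · have := Fintype.card_le_one_iff_subsingleton.1 h.le
      exact deltaComp_boxProd_of_subsingleton_right G H
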